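/- Superadditivity of the n-block upper bound sequence: define nC̄_n as the maximum of (1/2) log det((I+B_n) K_{w,n} (I+B_n)^T + K_{s,n}) - (1/2) log det K_{w,n} over positive semidefinite K_{s,n} and strictly lower triangular B_n subject to tr(K_{s,n} + B_n(K_{w,n}+K_{v,n})B_n^T) ≤ nP, where K_{w,n}, K_{v,n} are the n×n covariance matrices of stationary Gaussian processes {W_i} and {V_i}. Then the sequence (n C̄_n) is superadditive: (m+n) C̄_{m+n} ≥ m C̄_m + n C̄_n, and hence lim_{n→∞} C̄_n exists and equals sup_n C̄_n (assuming the bounds are finite). -/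

import Mathlib

open Matrix Filter

/-- A matrix is strictly lower triangular if all entries on or above the diagonal vanish. -/
def StrictLowerTri {n : ℕ} (B : Matrix (Fin n) (Fin n) ℝ) : Prop :=
  ∀ i j : Fin n, i ≤ j → B i j = 0

/-- The n×n covariance matrix of a stationary process with autocovariance `r`. -/
def toepCov (r : ℕ → ℝ) (n : ℕ) : Matrix (Fin n) (Fin n) ℝ :=
  Matrix.of fun i j : Fin n => r ((i : ℤ) - (j : ℤ)).natAbs

/-- The set of objective values of the n-block upper-bound optimization; `n * C̄_n` is
its supremum. -/
def objVals (rw rv : ℕ → ℝ) (P : ℝ) (n : ℕ) : Set ℝ :=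
  {y | ∃ Ks B : Matrix (Fin n) (Fin n) ℝ, Ks.PosSemidef ∧ StrictLowerTri B ∧
    (Ks + B * (toepCov rw n + toepCov rv n) * Bᵀ).trace ≤ n * P ∧
    y = (1 / 2) * Real.log (((1 + B) * toepCov rw n * (1 + B)ᵀ + Ks).det)
        - (1 / 2) * Real.log ((toepCov rw n).det)}

/-! Feasible points of the `m`- and `n`-block problems combine block-diagonally,
`Ks = diag(Ks₁, Ks₂)` and `B = diag(B₁, B₂)`, into a feasible point of the `(m + n)`-block
problem: traces add and `B` stays strictly lower triangular. As `det (1 + B) = 1`, each objective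
is `log det (A + Ks) - log det A` with `A = (1 + B) K (1 + B)ᵀ`, and by stationarity the diagonal
blocks of `K_{m+n}` are `K_m` and `K_n`. So it suffices that for positive definite `A` and
block-diagonal positive semidefinite `D` the gain `log det (A + D) - log det A` dominates the sum
of the gains of the diagonal blocks. Adding `D` one block at a time, the gain of the whole matrix
equals the gain of a Schur complement `S ≤ A₁₁`, and `M ↦ log det (M + E) - log det M` is
antitone in the Loewner order. Fekete's lemma then gives convergence to the supremum. -/

namespace Matrix

variable {ι κ : Type*} [Fintype ι] [Fintype κ]

lemma trace_fromBlocks {R : Type*} [AddCommMonoid R] (A : Matrix ι ι R) (B : Matrix ι κ R)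
    (C : Matrix κ ι R) (D : Matrix κ κ R) : (fromBlocks A B C D).trace = A.trace + D.trace :=
  Fintype.sum_sum_type _

lemma trace_reindex_self {R : Type*} [AddCommMonoid R] (e : ι ≃ κ) (M : Matrix ι ι R) :
    (reindex e e M).trace = M.trace :=
  e.symm.sum_comp M.diag

lemma fromBlocks_zero_mul_mul_transpose {R : Type*} [CommRing R] (U₁ : Matrix ι ι R)
    (U₂ : Matrix κ κ R) (K : Matrix (ι ⊕ κ) (ι ⊕ κ) R) :
    fromBlocks U₁ 0 0 U₂ * K * (fromBlocks U₁ 0 0 U₂)ᵀ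
      = fromBlocks (U₁ * K.toBlocks₁₁ * U₁ᵀ) (U₁ * K.toBlocks₁₂ * U₂ᵀ)
          (U₂ * K.toBlocks₂₁ * U₁ᵀ) (U₂ * K.toBlocks₂₂ * U₂ᵀ) := by
  conv_lhs => rw [← fromBlocks_toBlocks K]
  simp [fromBlocks_transpose, fromBlocks_multiply, Matrix.mul_assoc]

variable [DecidableEq ι] [DecidableEq κ]

open scoped MatrixOrder in
lemma PosSemidef.exists_eq_conjTranspose_mul_self {E : Matrix ι ι ℝ} (hE : E.PosSemidef) :
    ∃ C : Matrix ι ι ℝ, E = Cᴴ * C :=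
  CStarAlgebra.nonneg_iff_eq_star_mul_self.mp hE.nonneg

lemma PosSemidef.fromBlocks_zero {A : Matrix ι ι ℝ} {D : Matrix κ κ ℝ} (hA : A.PosSemidef)
    (hD : D.PosSemidef) : (fromBlocks A 0 0 D).PosSemidef := by
  obtain ⟨C, rfl⟩ := hA.exists_eq_conjTranspose_mul_self
  obtain ⟨G, rfl⟩ := hD.exists_eq_conjTranspose_mul_self
  simpa [fromBlocks_transpose, fromBlocks_multiply] using
    posSemidef_conjTranspose_mul_self (fromBlocks C 0 0 G)

lemma PosSemidef.one_le_det_one_add {M : Matrix ι ι ℝ} (hM : M.PosSemidef) : 1 ≤ (1 + M).det := by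
  have hH : (1 + M).IsHermitian := isHermitian_one.add hM.1
  rw [hH.det_eq_prod_eigenvalues]
  refine Finset.one_le_prod fun i _ => ?_
  set v := hH.eigenvectorBasis i
  have hunit : star v.ofLp ⬝ᵥ v.ofLp = 1 := by
    rw [dotProduct_comm, ← EuclideanSpace.inner_eq_star_dotProduct, real_inner_self_eq_norm_sq,
      hH.eigenvectorBasis.orthonormal.1 i, one_pow]
  have hnonneg := hM.dotProduct_mulVec_nonneg v.ofLp
  rw [hH.eigenvalues_eq, add_mulVec, one_mulVec, dotProduct_add, hunit]
  simpa using hnonneg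

lemma PosDef.det_le_det {P Q : Matrix ι ι ℝ} (hP : P.PosDef) (hPQ : (Q - P).PosSemidef) :
    P.det ≤ Q.det := by
  obtain ⟨C, hC⟩ := hPQ.exists_eq_conjTranspose_mul_self
  rw [← add_sub_cancel P Q, hC, det_add_mul Cᴴ C hP.det_pos.ne'.isUnit]
  exact le_mul_of_one_le_right hP.det_pos.le
    (hP.inv.posSemidef.mul_mul_conjTranspose_same C).one_le_det_one_add

lemma PosDef.posSemidef_inv_sub_inv {P Q : Matrix ι ι ℝ} (hP : P.PosDef)
    (hPQ : (Q - P).PosSemidef) : (P⁻¹ - Q⁻¹).PosSemidef := by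
  have hQ : Q.PosDef := by simpa using hP.add_posSemidef hPQ
  have hPu := hP.det_pos.ne'.isUnit
  have := hP.isUnit.invertible
  have := hQ.isUnit.invertible
  -- the two Schur complements of `[[Q, P], [P, P]]` are `Q - P` and `P - P Q⁻¹ P`
  have hblock : (fromBlocks Q P Pᴴ P).PosSemidef := by
    rwa [PosDef.fromBlocks₂₂ _ _ hP, hP.1.eq, mul_nonsing_inv _ hPu, Matrix.one_mul]
  rw [PosDef.fromBlocks₁₁ _ _ hQ, hP.1.eq] at hblock
  have hconj : P⁻¹ - Q⁻¹ = P⁻¹ * (P - P * Q⁻¹ * P) * P⁻¹ᴴ := by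
    rw [hP.inv.1.eq, Matrix.mul_sub, Matrix.sub_mul, nonsing_inv_mul _ hPu, Matrix.one_mul,
      ← Matrix.mul_assoc, ← Matrix.mul_assoc, nonsing_inv_mul _ hPu, Matrix.one_mul,
      Matrix.mul_assoc, mul_nonsing_inv _ hPu, Matrix.mul_one]
  rw [hconj]
  exact hblock.mul_mul_conjTranspose_same P⁻¹

lemma PosDef.log_det_add_sub_log_det_le {S Q E : Matrix ι ι ℝ} (hS : S.PosDef)
    (hSQ : (Q - S).PosSemidef) (hE : E.PosSemidef) :
    Real.log (Q + E).det - Real.log Q.det ≤ Real.log (S + E).det - Real.log S.det := by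
  have hQ : Q.PosDef := by simpa using hS.add_posSemidef hSQ
  obtain ⟨C, rfl⟩ := hE.exists_eq_conjTranspose_mul_self
  have hQC : (1 + C * Q⁻¹ * Cᴴ).PosDef :=
    PosDef.one.add_posSemidef (hQ.inv.posSemidef.mul_mul_conjTranspose_same C)
  have hSC : (1 + C * S⁻¹ * Cᴴ).PosDef :=
    PosDef.one.add_posSemidef (hS.inv.posSemidef.mul_mul_conjTranspose_same C)
  have hle : (1 + C * Q⁻¹ * Cᴴ).det ≤ (1 + C * S⁻¹ * Cᴴ).det := by
    refine hQC.det_le_det ?_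
    rw [add_sub_add_left_eq_sub, ← Matrix.sub_mul, ← Matrix.mul_sub]
    exact (hS.posSemidef_inv_sub_inv hSQ).mul_mul_conjTranspose_same C
  rw [det_add_mul Cᴴ C hS.det_pos.ne'.isUnit, det_add_mul Cᴴ C hQ.det_pos.ne'.isUnit,
    Real.log_mul hS.det_pos.ne' hSC.det_pos.ne', Real.log_mul hQ.det_pos.ne' hQC.det_pos.ne',
    add_sub_cancel_left, add_sub_cancel_left]
  exact Real.log_le_log hQC.det_pos hle

lemma PosDef.log_det_toBlocks₁₁_add_sub_le {A : Matrix (ι ⊕ κ) (ι ⊕ κ) ℝ} (hA : A.PosDef)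
    {D : Matrix ι ι ℝ} (hD : D.PosSemidef) :
    Real.log (A.toBlocks₁₁ + D).det - Real.log A.toBlocks₁₁.det
      ≤ Real.log (A + fromBlocks D 0 0 0).det - Real.log A.det := by
  set X := A.toBlocks₁₂
  have hA' : A = fromBlocks A.toBlocks₁₁ X Xᴴ A.toBlocks₂₂ := by
    rw [show Xᴴ = A.toBlocks₂₁ from congr_arg toBlocks₂₁ hA.1, fromBlocks_toBlocks]
  have hA₂₂ : A.toBlocks₂₂.PosDef := hA.submatrix Sum.inr_injective
  have := hA₂₂.isUnit.invertible
  set S := A.toBlocks₁₁ - X * A.toBlocks₂₂⁻¹ * Xᴴ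
  have hdet : A.det = A.toBlocks₂₂.det * S.det := by
    conv_lhs => rw [hA', det_fromBlocks₂₂, invOf_eq_nonsing_inv]
  have hdetD : (A + fromBlocks D 0 0 0).det = A.toBlocks₂₂.det * (S + D).det := by
    conv_lhs => rw [hA', fromBlocks_add, add_zero, add_zero, add_zero, det_fromBlocks₂₂,
      invOf_eq_nonsing_inv, ← sub_add_eq_add_sub]
  have hS : S.PosDef := by
    have hSpsd : S.PosSemidef := (PosDef.fromBlocks₂₂ _ _ hA₂₂).mp (hA' ▸ hA.posSemidef)
    refine hSpsd.posDef_iff_det_ne_zero.mpr fun h0 => hA.det_pos.ne' ?_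
    rw [hdet, h0, mul_zero]
  have hSA : (A.toBlocks₁₁ - S).PosSemidef := by
    rw [sub_sub_cancel]
    simpa using hA₂₂.inv.posSemidef.mul_mul_conjTranspose_same X
  rw [hdet, hdetD, Real.log_mul hA₂₂.det_pos.ne' (hS.add_posSemidef hD).det_pos.ne',
    Real.log_mul hA₂₂.det_pos.ne' hS.det_pos.ne', add_sub_add_left_eq_sub]
  exact hS.log_det_add_sub_log_det_le hSA hD

lemma PosDef.log_det_toBlocks₂₂_add_sub_le {A : Matrix (ι ⊕ κ) (ι ⊕ κ) ℝ} (hA : A.PosDef)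
    {D : Matrix κ κ ℝ} (hD : D.PosSemidef) :
    Real.log (A.toBlocks₂₂ + D).det - Real.log A.toBlocks₂₂.det
      ≤ Real.log (A + fromBlocks 0 0 0 D).det - Real.log A.det := by
  let σ := Equiv.sumComm κ ι
  have h := (hA.submatrix σ.injective).log_det_toBlocks₁₁_add_sub_le hD
  have hswap : A.submatrix σ σ + fromBlocks D 0 0 0 = (A + fromBlocks 0 0 0 D).submatrix σ σ := by
    rw [← fromBlocks_submatrix_sum_swap_sum_swap]
    rfl
  rwa [hswap, det_submatrix_equiv_self, det_submatrix_equiv_self] at h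

lemma PosDef.log_det_toBlocks_add_sub_le {A : Matrix (ι ⊕ κ) (ι ⊕ κ) ℝ} (hA : A.PosDef)
    {D₁ : Matrix ι ι ℝ} {D₂ : Matrix κ κ ℝ} (hD₁ : D₁.PosSemidef) (hD₂ : D₂.PosSemidef) :
    Real.log (A.toBlocks₁₁ + D₁).det - Real.log A.toBlocks₁₁.det
      + (Real.log (A.toBlocks₂₂ + D₂).det - Real.log A.toBlocks₂₂.det)
      ≤ Real.log (A + fromBlocks D₁ 0 0 D₂).det - Real.log A.det := by
  set A' := A + fromBlocks D₁ 0 0 0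
  have hA' : A'.PosDef := hA.add_posSemidef (hD₁.fromBlocks_zero .zero)
  have h₂ := hA'.log_det_toBlocks₂₂_add_sub_le hD₂
  have e₂ : A'.toBlocks₂₂ = A.toBlocks₂₂ := by ext; simp [A', toBlocks₂₂]
  have eA : A' + fromBlocks 0 0 0 D₂ = A + fromBlocks D₁ 0 0 D₂ := by
    rw [add_assoc, fromBlocks_add]; simp
  rw [e₂, eA] at h₂
  linarith [hA.log_det_toBlocks₁₁_add_sub_le hD₁]

end Matrix

lemma csSup_add_csSup_le {A B C : Set ℝ} (hA : A.Nonempty) (hA' : BddAbove A) (hB : B.Nonempty)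
    (hB' : BddAbove B) (hC : BddAbove C) (h : ∀ a ∈ A, ∀ b ∈ B, ∃ c ∈ C, a + b ≤ c) :
    sSup A + sSup B ≤ sSup C := by
  rw [← csSup_add hA hA' hB hB']
  refine csSup_le (hA.add hB) ?_
  rintro _ ⟨a, ha, b, hb, rfl⟩
  obtain ⟨c, hc, hle⟩ := h a ha b hb
  exact hle.trans (le_csSup hC hc)

/-- The junk term `u 0 / 0 = 0` does not affect the supremum because `u ≥ 0`. -/
theorem tendsto_div_iSup_of_superadditive {u : ℕ → ℝ} (hsuper : ∀ m n, u m + u n ≤ u (m + n))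
    (hnonneg : ∀ n, 0 ≤ u n) (hbdd : BddAbove (Set.range fun n => u n / n)) :
    Tendsto (fun n => u n / n) atTop (nhds (⨆ n, u n / n)) := by
  have hsub : Subadditive (-u) := fun m n => by
    simp only [Pi.neg_apply]
    linarith [hsuper m n]
  have hbdd' : BddBelow (Set.range fun n => (-u) n / n) := by
    obtain ⟨c, hc⟩ := hbdd
    refine ⟨-c, ?_⟩
    rintro _ ⟨n, rfl⟩
    simp only [Pi.neg_apply, neg_div, neg_le_neg_iff]
    exact hc ⟨n, rfl⟩
  have hlim : Tendsto (fun n => u n / n) atTop (nhds (-hsub.lim)) := by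
    simpa [neg_div] using (hsub.tendsto_lim hbdd').neg
  convert hlim using 2
  refine le_antisymm (ciSup_le fun n => ?_) (le_of_tendsto' hlim fun n => le_ciSup hbdd n)
  rcases eq_or_ne n 0 with rfl | hn
  · simpa using ge_of_tendsto' hlim fun n => div_nonneg (hnonneg n) n.cast_nonneg
  · have := hsub.lim_le_div hbdd' hn
    simp only [Pi.neg_apply, neg_div] at this
    linarith

section NBlock

variable {m n : ℕ}

lemma StrictLowerTri.det_one_add {B : Matrix (Fin n) (Fin n) ℝ} (hB : StrictLowerTri B) :
    (1 + B).det = 1 := by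
  have htri : (1 + B).IsLowerTriangular := fun i j (hij : i < j) => by
    rw [Matrix.add_apply, one_apply_ne hij.ne, hB i j hij.le, add_zero]
  rw [det_of_isLowerTriangular _ htri]
  exact Finset.prod_eq_one fun i _ => by
    rw [Matrix.add_apply, one_apply_eq, hB i i le_rfl, add_zero]

lemma StrictLowerTri.det_one_add_mul_mul_transpose {B : Matrix (Fin n) (Fin n) ℝ}
    (hB : StrictLowerTri B) (T : Matrix (Fin n) (Fin n) ℝ) :
    ((1 + B) * T * (1 + B)ᵀ).det = T.det := by
  rw [det_mul, det_mul, det_transpose, hB.det_one_add, one_mul, mul_one]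

lemma StrictLowerTri.reindex_fromBlocks {B₁ : Matrix (Fin m) (Fin m) ℝ}
    {B₂ : Matrix (Fin n) (Fin n) ℝ} (h₁ : StrictLowerTri B₁) (h₂ : StrictLowerTri B₂) :
    StrictLowerTri (reindex finSumFinEquiv finSumFinEquiv (fromBlocks B₁ 0 0 B₂)) := by
  intro i j hij
  rw [reindex_apply, submatrix_apply]
  obtain ⟨i | i, rfl⟩ := finSumFinEquiv.surjective i <;>
    obtain ⟨j | j, rfl⟩ := finSumFinEquiv.surjective j <;>
    simp only [Equiv.symm_apply_apply, fromBlocks_apply₁₁, fromBlocks_apply₁₂,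
      fromBlocks_apply₂₁, fromBlocks_apply₂₂, Matrix.zero_apply] at hij ⊢
  · simp only [finSumFinEquiv_apply_left] at hij
    exact h₁ i j hij
  · exact h₂ i j (by simpa using hij)

lemma toepCov_submatrix_toBlocks₁₁ (r : ℕ → ℝ) :
    ((toepCov r (m + n)).submatrix finSumFinEquiv finSumFinEquiv).toBlocks₁₁ = toepCov r m := by
  ext i j
  simp [toBlocks₁₁, toepCov]

lemma toepCov_submatrix_toBlocks₂₂ (r : ℕ → ℝ) :
    ((toepCov r (m + n)).submatrix finSumFinEquiv finSumFinEquiv).toBlocks₂₂ = toepCov r n := by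
  ext i j
  simp [toBlocks₂₂, toepCov]

lemma zero_mem_objVals {rw rv : ℕ → ℝ} {P : ℝ} (hP : 0 ≤ P) : (0 : ℝ) ∈ objVals rw rv P n :=
  ⟨0, 0, .zero, fun _ _ _ => rfl, by simpa using mul_nonneg n.cast_nonneg hP, by simp⟩

lemma exists_add_le_mem_objVals {rw rv : ℕ → ℝ} {P y z : ℝ} (hw : (toepCov rw (m + n)).PosDef)
    (hy : y ∈ objVals rw rv P m) (hz : z ∈ objVals rw rv P n) :
    ∃ w ∈ objVals rw rv P (m + n), y + z ≤ w := by
  obtain ⟨Ks₁, B₁, hKs₁, hB₁, htr₁, rfl⟩ := hy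
  obtain ⟨Ks₂, B₂, hKs₂, hB₂, htr₂, rfl⟩ := hz
  let e : Fin m ⊕ Fin n ≃ Fin (m + n) := finSumFinEquiv
  let R := reindexAlgEquiv ℝ ℝ e
  let Kw := (toepCov rw (m + n)).submatrix e e
  let Kv := (toepCov rv (m + n)).submatrix e e
  have hRKw : R Kw = toepCov rw (m + n) := by simp [R, Kw]
  have hRKv : R Kv = toepCov rv (m + n) := by simp [R, Kv]
  let D := fromBlocks Ks₁ 0 0 Ks₂
  let B := fromBlocks B₁ 0 0 B₂
  let U := fromBlocks (1 + B₁) 0 0 (1 + B₂)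
  have hRU : R U = 1 + R B := by
    rw [← map_one R, ← map_add, ← fromBlocks_one, fromBlocks_add]
    simp [U]
  have hRt : ∀ X, (R X)ᵀ = R Xᵀ := fun X => transpose_reindex e e X
  refine ⟨_, ⟨R D, R B, (hKs₁.fromBlocks_zero hKs₂).submatrix _, hB₁.reindex_fromBlocks hB₂,
    ?_, rfl⟩, ?_⟩
  · have h₁₁ : (Kw + Kv).toBlocks₁₁ = toepCov rw m + toepCov rv m := by
      rw [← toepCov_submatrix_toBlocks₁₁ rw (n := n), ← toepCov_submatrix_toBlocks₁₁ rv (n := n)]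
      rfl
    have h₂₂ : (Kw + Kv).toBlocks₂₂ = toepCov rw n + toepCov rv n := by
      rw [← toepCov_submatrix_toBlocks₂₂ rw (m := m), ← toepCov_submatrix_toBlocks₂₂ rv (m := m)]
      rfl
    rw [← hRKw, ← hRKv, hRt, ← map_add, ← map_mul, ← map_mul, ← map_add, coe_reindexAlgEquiv,
      trace_reindex_self, fromBlocks_zero_mul_mul_transpose, fromBlocks_add, trace_fromBlocks,
      h₁₁, h₂₂]
    push_cast
    linarith
  · let A := U * Kw * Uᵀ
    have hdetU : U.det = 1 := by
      rw [det_fromBlocks_zero₂₁, hB₁.det_one_add, hB₂.det_one_add, one_mul]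
    have hA : A.PosDef := by
      have hU : IsUnit U := (isUnit_iff_isUnit_det U).mpr (hdetU ▸ isUnit_one)
      exact (IsUnit.posDef_star_right_conjugate_iff hU).mpr (hw.submatrix e.injective)
    have hA₁₁ : A.toBlocks₁₁ = (1 + B₁) * toepCov rw m * (1 + B₁)ᵀ := by
      simp only [A, U, fromBlocks_zero_mul_mul_transpose, toBlocks_fromBlocks₁₁, Kw, e,
        toepCov_submatrix_toBlocks₁₁]
    have hA₂₂ : A.toBlocks₂₂ = (1 + B₂) * toepCov rw n * (1 + B₂)ᵀ := by
      simp only [A, U, fromBlocks_zero_mul_mul_transpose, toBlocks_fromBlocks₂₂, Kw, e,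
        toepCov_submatrix_toBlocks₂₂]
    have hdetA : A.det = (toepCov rw (m + n)).det := by
      rw [det_mul, det_mul, det_transpose, hdetU, one_mul, mul_one]
      exact det_submatrix_equiv_self e _
    have hdet : ((1 + R B) * toepCov rw (m + n) * (1 + R B)ᵀ + R D).det = (A + D).det := by
      rw [← hRU, ← hRKw, hRt, ← map_mul, ← map_mul, ← map_add, coe_reindexAlgEquiv,
        det_reindex_self]
    have key := hA.log_det_toBlocks_add_sub_le hKs₁ hKs₂
    rw [hA₁₁, hA₂₂, hB₁.det_one_add_mul_mul_transpose, hB₂.det_one_add_mul_mul_transpose,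
      hdetA] at key
    rw [hdet]
    linarith

end NBlock

theorem nblock_bound_superadditive_and_convergent_general
    (rw rv : ℕ → ℝ) (P : ℝ) (hP : 0 ≤ P)
    (hw : ∀ n, (toepCov rw n).PosDef)
    (hbdd : ∀ n, BddAbove (objVals rw rv P n))
    (hfin : BddAbove (Set.range fun n : ℕ => sSup (objVals rw rv P n) / n)) :
    (∀ m n : ℕ, sSup (objVals rw rv P m) + sSup (objVals rw rv P n)
        ≤ sSup (objVals rw rv P (m + n))) ∧
    Tendsto (fun n : ℕ => sSup (objVals rw rv P n) / n) atTop
      (nhds (⨆ n : ℕ, sSup (objVals rw rv P n) / n)) := by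
  have hzero : ∀ k, (0 : ℝ) ∈ objVals rw rv P k := fun _ => zero_mem_objVals hP
  have hsuper : ∀ m n : ℕ, sSup (objVals rw rv P m) + sSup (objVals rw rv P n)
      ≤ sSup (objVals rw rv P (m + n)) := fun m n =>
    csSup_add_csSup_le ⟨0, hzero m⟩ (hbdd m) ⟨0, hzero n⟩ (hbdd n) (hbdd _)
      fun _ hy _ hz => exists_add_le_mem_objVals (hw _) hy hz
  exact ⟨hsuper, tendsto_div_iSup_of_superadditive hsuper
    (fun k => le_csSup (hbdd k) (hzero k)) hfin⟩

/-- For stationary Gaussian noise processes, the sequence `n ↦ n C̄_n` of n-block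
upper bounds is superadditive, and hence `C̄_n = (n C̄_n)/n` converges to
`sup_n C̄_n` (assuming the bounds are finite). -/
theorem nblock_bound_superadditive_and_convergent
    (rw rv : ℕ → ℝ) (P : ℝ) (hP : 0 ≤ P)
    (hw : ∀ n, (toepCov rw n).PosDef) (hv : ∀ n, (toepCov rv n).PosDef)
    (hbdd : ∀ n, BddAbove (objVals rw rv P n))
    (hfin : BddAbove (Set.range fun n : ℕ => sSup (objVals rw rv P n) / n)) :
    (∀ m n : ℕ, sSup (objVals rw rv P m) + sSup (objVals rw rv P n)
        ≤ sSup (objVals rw rv P (m + n))) ∧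
    Tendsto (fun n : ℕ => sSup (objVals rw rv P n) / n) atTop
      (nhds (⨆ n : ℕ, sSup (objVals rw rv P n) / n)) :=
  nblock_bound_superadditive_and_convergent_general rw rv P hP hw hbdd hfin
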